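/- arXiv:2510.12035 — 4 statements merged into one kernel-verified Lean document; each statement's English description precedes it below -/
import Mathlib

section
/- Fix integers n ≥ 2 and 1 ≤ ℓ ≤ n−1. For a binary vector b of length n, define α_b : {1,…,n−1} → {−1,0,1} by α_b(c) = b_c − b_{c+1}. Then the map b ↦ α_b restricts to a bijection from the set of binary vectors of length n with exactly ℓ ones onto the set of functions α : {1,…,n−1} → {−1,0,1} satisfying all of: (i) α is not identically 0; (ii) the nonzero values of α, read in increasing order of the argument, alternate in sign; (iii) letting c_max be the largest c with α(c) ≠ 0, the sum ∑_{c=1}^{n−1} c · α(c) equals ℓ if α(c_max) = 1 and equals ℓ − n if α(c_max) = −1. (This is the edge-by-edge content of the bijection between valid strandings and binary labelings of sl_n web graphs: condition (ii)–(iii) is the validity condition on a weight-ℓ edge.) -/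
/-!
For a binary labeling `b` with difference sequence `α_c = b_c − b_{c+1}`, summation by parts gives
`∑ c · α_c = ℓ − n · b_n`, and `b` is constant across every run of zeros of `α`. Hence consecutive
nonzero values of `α` are opposite switches, the last one is `1 − 2 b_n` (which turns the weighted
sum into condition (iii)), and `0 < ℓ < n` rules out `α = 0`. Conversely `α` and its weighted sum
determine `b_n`, hence `b_i = b_n + ∑_{i ≤ d < n} α_d`; read from the right, alternation keeps
these values in `{0, 1}`.
-/

open Finset

def Alternating (α : ℕ → ℤ) : Prop :=
  ∀ c c', c < c' → α c ≠ 0 → α c' ≠ 0 → (∀ d, c < d → d < c' → α d = 0) → α c' = -α c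

def edgeDiff (n : ℕ) (b : ℕ → ℤ) (c : ℕ) : ℤ :=
  if c ∈ Icc 1 (n - 1) then b c - b (c + 1) else 0

def binaryLabelings (n ℓ : ℕ) : Set (ℕ → ℤ) :=
  {b | (∀ i, b i = 0 ∨ b i = 1) ∧ (∀ i, i ∉ Icc 1 n → b i = 0) ∧
    ((Icc 1 n).filter (fun i => b i = 1)).card = ℓ}

def validStrandings (n ℓ : ℕ) : Set (ℕ → ℤ) :=
  {α | (∀ c, c ∉ Icc 1 (n - 1) → α c = 0) ∧ (∀ c, α c = -1 ∨ α c = 0 ∨ α c = 1) ∧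
    (∃ c, α c ≠ 0) ∧ Alternating α ∧
    (∀ cmax, α cmax ≠ 0 → (∀ c, cmax < c → α c = 0) →
      ∑ c ∈ Icc 1 (n - 1), (c : ℤ) * α c = if α cmax = 1 then (ℓ : ℤ) else (ℓ : ℤ) - n)}

lemma eq_of_forall_succ_eq {β : Type*} {f : ℕ → β} {i j : ℕ} (hij : i ≤ j)
    (h : ∀ d, i ≤ d → d < j → f (d + 1) = f d) : f j = f i := by
  induction j, hij using Nat.le_induction with
  | base => rfl
  | succ j hij ih => rw [h j hij j.lt_succ_self, ih fun d hid hdj => h d hid (by omega)]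

lemma sum_Icc_mul_sub_succ {R : Type*} [CommRing R] (f : ℕ → R) (n : ℕ) :
    ∑ c ∈ Icc 1 (n - 1), (c : R) * (f c - f (c + 1)) = ∑ i ∈ Icc 1 n, f i - n * f n := by
  obtain _ | m := n
  · simp
  rw [Nat.add_sub_cancel]
  induction m with
  | zero => simp
  | succ m ih =>
    rw [sum_Icc_succ_top (by omega), sum_Icc_succ_top (by omega : 1 ≤ m + 1 + 1), ih]
    push_cast
    ring

lemma natCast_card_filter_eq_one_eq_sum {s : Finset ℕ} {b : ℕ → ℤ}
    (hb : ∀ i, b i = 0 ∨ b i = 1) : ((s.filter (fun i => b i = 1)).card : ℤ) = ∑ i ∈ s, b i := by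
  rw [natCast_card_filter]
  refine sum_congr rfl fun i _ => ?_
  rcases hb i with h | h <;> simp [h]

lemma exists_last_ne_zero {M : Type*} [Zero M] {α : ℕ → M} {N : ℕ} (hsupp : ∀ c, N < c → α c = 0)
    (hne : ∃ c, α c ≠ 0) : ∃ cmax, α cmax ≠ 0 ∧ ∀ c, cmax < c → α c = 0 := by
  classical
  have hS : ((range (N + 1)).filter (α · ≠ 0)).Nonempty := by
    obtain ⟨c, hc⟩ := hne
    exact ⟨c, mem_filter.2 ⟨mem_range.2 (by by_contra h; exact hc (hsupp c (by omega))), hc⟩⟩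
  refine ⟨_, (mem_filter.1 (max'_mem _ hS)).2, fun c hc => ?_⟩
  by_contra h
  have hcS : c ∈ (range (N + 1)).filter (α · ≠ 0) :=
    mem_filter.2 ⟨mem_range.2 (by by_contra h'; exact h (hsupp c (by omega))), h⟩
  exact absurd (le_max' _ c hcS) (not_le.2 hc)

/-- Reading from the right, the first nonzero value of `α` at or after `i` is `2 b_i − 1`:
this invariant is what alternation propagates. -/
lemma binary_of_alternating_diff {α b : ℕ → ℤ} {n : ℕ} (halt : Alternating α)
    (hdiff : ∀ c < n, b c - b (c + 1) = α c) (hbn : b n = 0 ∨ b n = 1)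
    (hlast : ∀ c < n, α c ≠ 0 → (∀ d, c < d → d < n → α d = 0) → α c = 1 - 2 * b n) :
    ∀ i ≤ n, b i = 0 ∨ b i = 1 := by
  suffices h : ∀ i ≤ n, (b i = 0 ∨ b i = 1) ∧ ∀ d, i ≤ d → d < n → α d ≠ 0 →
      (∀ e, i ≤ e → e < d → α e = 0) → α d = 2 * b i - 1 from
    fun i hi => (h i hi).1
  intro i hi
  induction hi using Nat.decreasingInduction with
  | self => exact ⟨hbn, fun d hnd hdn => absurd hdn (by omega)⟩
  | of_succ i hin ih =>
    obtain ⟨hbin, hfirst⟩ := ih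
    by_cases hαi : α i = 0
    · have hbi : b i = b (i + 1) := by linarith [hdiff i hin]
      refine ⟨hbi ▸ hbin, fun d hid hdn hd hzero => ?_⟩
      have hid' : i + 1 ≤ d := by
        by_contra h
        exact hd (by rwa [show d = i by omega])
      rw [hbi]
      exact hfirst d hid' hdn hd fun e he hed => hzero e (by omega) hed
    have hαi' : α i = 1 - 2 * b (i + 1) := by
      by_cases hnext : ∃ d, i < d ∧ d < n ∧ α d ≠ 0
      · classical
        obtain ⟨hid, hdn, hd⟩ := Nat.find_spec hnext
        have hzero : ∀ e, i < e → e < Nat.find hnext → α e = 0 := fun e hie hed => by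
          by_contra h
          exact Nat.find_min hnext hed ⟨hie, by omega, h⟩
        linarith [halt i _ hid hαi hd hzero, hfirst _ hid hdn hd hzero]
      · push Not at hnext
        have hconst : b n = b (i + 1) := eq_of_forall_succ_eq hin fun d hid hdn => by
          linarith [hdiff d hdn, hnext d hid hdn]
        rw [← hconst]
        exact hlast i hin hαi fun d hid hdn => hnext d hid hdn
    have hbi : b i = 1 - b (i + 1) := by linarith [hdiff i hin]
    refine ⟨by omega, fun d hid hdn hd hzero => ?_⟩
    obtain rfl : d = i := by
      by_contra h
      exact hαi (hzero i le_rfl (by omega))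
    omega

lemma add_sum_Ico_binary {α : ℕ → ℤ} {n cmax : ℕ} {x : ℤ} (halt : Alternating α)
    (hx : x = 0 ∨ x = 1) (hcmax : α cmax = 1 - 2 * x) (hafter : ∀ c, cmax < c → α c = 0)
    (hcn : cmax < n) : ∀ i ≤ n, x + ∑ d ∈ Ico i n, α d = 0 ∨ x + ∑ d ∈ Ico i n, α d = 1 := by
  refine binary_of_alternating_diff (b := fun i => x + ∑ d ∈ Ico i n, α d) halt
    (fun c hc => by simp only [sum_eq_sum_Ico_succ_bot hc]; ring) (by simpa using hx)
    fun c hcn' hc hzero => ?_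
  have hc_eq : c = cmax := by
    by_contra h
    rcases Nat.lt_or_gt_of_ne h with h | h
    · have := hzero cmax h hcn
      omega
    · exact hc (hafter c h)
  simpa [hc_eq] using hcmax

lemma edgeDiff_of_mem {n c : ℕ} (b : ℕ → ℤ) (hc : c ∈ Icc 1 (n - 1)) :
    edgeDiff n b c = b c - b (c + 1) :=
  if_pos hc

lemma mem_Icc_of_edgeDiff_ne_zero {n c : ℕ} {b : ℕ → ℤ} (h : edgeDiff n b c ≠ 0) :
    c ∈ Icc 1 (n - 1) := by
  by_contra hc
  exact h (if_neg hc)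

lemma eq_of_edgeDiff_eq_zero {n i j : ℕ} {b : ℕ → ℤ} (hi : 1 ≤ i) (hij : i ≤ j) (hjn : j ≤ n)
    (h : ∀ d, i ≤ d → d < j → edgeDiff n b d = 0) : b j = b i :=
  eq_of_forall_succ_eq hij fun d hid hdj => by
    have := h d hid hdj
    rw [edgeDiff_of_mem b (mem_Icc.2 ⟨by omega, by omega⟩)] at this
    omega

lemma weightedSum_edgeDiff {n ℓ : ℕ} {b : ℕ → ℤ} (hb : b ∈ binaryLabelings n ℓ) :
    ∑ c ∈ Icc 1 (n - 1), (c : ℤ) * edgeDiff n b c = ℓ - n * b n := by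
  obtain ⟨hb01, -, hcard⟩ := hb
  rw [sum_congr rfl fun c hc => by rw [edgeDiff_of_mem b hc], sum_Icc_mul_sub_succ,
    ← natCast_card_filter_eq_one_eq_sum hb01, hcard]

lemma mapsTo_edgeDiff {n ℓ : ℕ} (hl1 : 1 ≤ ℓ) (hl2 : ℓ ≤ n - 1) :
    Set.MapsTo (edgeDiff n) (binaryLabelings n ℓ) (validStrandings n ℓ) := by
  intro b hb
  have hweight := weightedSum_edgeDiff hb
  obtain ⟨hb01, -, -⟩ := hb
  refine ⟨fun c hc => if_neg hc, fun c => ?_, ?_, ?_, fun cmax hne hafter => ?_⟩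
  · unfold edgeDiff
    split_ifs
    · rcases hb01 c with h1 | h1 <;> rcases hb01 (c + 1) with h2 | h2 <;> omega
    · omega
  · by_contra! h
    simp only [h, mul_zero, sum_const_zero] at hweight
    rcases hb01 n with h0 | h0 <;> rw [h0] at hweight <;> omega
  · intro c c' hcc' hc hc' hzero
    have hcI := mem_Icc.1 (mem_Icc_of_edgeDiff_ne_zero hc)
    have hc'I := mem_Icc.1 (mem_Icc_of_edgeDiff_ne_zero hc')
    have hconst : b c' = b (c + 1) := eq_of_edgeDiff_eq_zero (by omega) hcc' (by omega) hzero
    rw [edgeDiff_of_mem b (mem_Icc.2 hcI), edgeDiff_of_mem b (mem_Icc.2 hc'I)] at *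
    rcases hb01 c with h1 | h1 <;> rcases hb01 (c + 1) with h2 | h2 <;>
      rcases hb01 (c' + 1) with h3 | h3 <;> omega
  · have hcI := mem_Icc.1 (mem_Icc_of_edgeDiff_ne_zero hne)
    have hconst : b n = b (cmax + 1) :=
      eq_of_edgeDiff_eq_zero (by omega) (by omega) le_rfl fun d hd _ => hafter d hd
    rw [edgeDiff_of_mem b (mem_Icc.2 hcI)] at hne ⊢
    rw [hweight]
    rcases hb01 cmax with h1 | h1 <;> rcases hb01 (cmax + 1) with h2 | h2 <;> simp_all

lemma injOn_edgeDiff {n ℓ : ℕ} (hn : n ≠ 0) :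
    Set.InjOn (edgeDiff n) (binaryLabelings n ℓ) := by
  intro b hb b' hb' heq
  have hbn : b n = b' n := by
    have h := weightedSum_edgeDiff hb
    rw [heq, weightedSum_edgeDiff hb'] at h
    exact (mul_left_cancel₀ (by exact_mod_cast hn) (by linarith : (n : ℤ) * b' n = n * b n)).symm
  funext i
  by_cases hi : i ∈ Icc 1 n
  · have hi' := mem_Icc.1 hi
    have hconst : (b - b') n = (b - b') i := eq_of_forall_succ_eq hi'.2 fun d hid hdn => by
      have h := congrFun heq d
      rw [edgeDiff_of_mem b (mem_Icc.2 ⟨by omega, by omega⟩),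
        edgeDiff_of_mem b' (mem_Icc.2 ⟨by omega, by omega⟩)] at h
      simp only [Pi.sub_apply]
      linarith
    simp only [Pi.sub_apply] at hconst
    linarith
  · rw [hb.2.1 i hi, hb'.2.1 i hi]

lemma surjOn_edgeDiff {n ℓ : ℕ} :
    Set.SurjOn (edgeDiff n) (binaryLabelings n ℓ) (validStrandings n ℓ) := by
  rintro α ⟨hsupp, hval, hne, halt, hweight⟩
  obtain ⟨cmax, hcmax, hafter⟩ := exists_last_ne_zero (N := n - 1)
    (fun c hc => hsupp c fun h => by simp only [mem_Icc] at h; omega) hne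
  have hcmaxI := mem_Icc.1 (by by_contra h; exact hcmax (hsupp cmax h))
  set x : ℤ := if α cmax = 1 then 0 else 1 with hx
  set B : ℕ → ℤ := fun i => x + ∑ d ∈ Ico i n, α d
  have hdiffB : ∀ c < n, B c - B (c + 1) = α c := fun c hc => by
    simp only [B, sum_eq_sum_Ico_succ_bot hc]
    ring
  have hBn : B n = x := by simp [B]
  have hB01 : ∀ i ≤ n, B i = 0 ∨ B i = 1 :=
    add_sum_Ico_binary halt (by rw [hx]; split_ifs <;> simp)
      (by rw [hx]; rcases hval cmax with h | h | h <;> simp_all) hafter (by omega)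
  set b : ℕ → ℤ := fun i => if i ∈ Icc 1 n then B i else 0
  have hb01 : ∀ i, b i = 0 ∨ b i = 1 := fun i => by
    simp only [b]
    split_ifs with h
    · exact hB01 i (mem_Icc.1 h).2
    · exact Or.inl rfl
  have hdiffb : ∀ c ∈ Icc 1 (n - 1), b c - b (c + 1) = α c := fun c hc => by
    have hc' := mem_Icc.1 hc
    simp only [b, if_pos (mem_Icc.2 (⟨by omega, by omega⟩ : 1 ≤ c ∧ c ≤ n)),
      if_pos (mem_Icc.2 (⟨by omega, by omega⟩ : 1 ≤ c + 1 ∧ c + 1 ≤ n))]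
    exact hdiffB c (by omega)
  have hsum : ∑ i ∈ Icc 1 n, b i = ℓ := by
    have h := hweight cmax hcmax hafter
    rw [sum_congr rfl fun c hc => by rw [← hdiffb c hc], sum_Icc_mul_sub_succ] at h
    have hbn : b n = x := by
      rw [← hBn]
      exact if_pos (mem_Icc.2 ⟨by omega, le_rfl⟩)
    rw [hbn, hx] at h
    split_ifs at h <;> linarith
  refine ⟨b, ⟨hb01, fun i hi => if_neg hi, ?_⟩, funext fun c => ?_⟩
  · exact_mod_cast (natCast_card_filter_eq_one_eq_sum hb01).trans hsum
  · by_cases hc : c ∈ Icc 1 (n - 1)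
    · rw [edgeDiff_of_mem b hc, hdiffb c hc]
    · rw [edgeDiff, if_neg hc, hsupp c hc]

theorem binary_labelings_biject_with_strandings_general (n ℓ : ℕ)
    (hl1 : 1 ≤ ℓ) (hl2 : ℓ ≤ n - 1) :
    Set.BijOn
      (fun (b : ℕ → ℤ) (c : ℕ) => if c ∈ Finset.Icc 1 (n - 1) then b c - b (c + 1) else 0)
      {b : ℕ → ℤ |
        (∀ i, b i = 0 ∨ b i = 1) ∧
        (∀ i, i ∉ Finset.Icc 1 n → b i = 0) ∧
        ((Finset.Icc 1 n).filter (fun i => b i = 1)).card = ℓ}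
      {α : ℕ → ℤ |
        (∀ c, c ∉ Finset.Icc 1 (n - 1) → α c = 0) ∧
        (∀ c, α c = -1 ∨ α c = 0 ∨ α c = 1) ∧
        (∃ c, α c ≠ 0) ∧
        (∀ c c', c < c' → α c ≠ 0 → α c' ≠ 0 →
          (∀ d, c < d → d < c' → α d = 0) → α c' = -α c) ∧
        (∀ cmax, α cmax ≠ 0 → (∀ c, cmax < c → α c = 0) →
          ∑ c ∈ Finset.Icc 1 (n - 1), (c : ℤ) * α c =
            if α cmax = 1 then (ℓ : ℤ) else (ℓ : ℤ) - n)} :=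
  ⟨mapsTo_edgeDiff hl1 hl2, injOn_edgeDiff (by omega), surjOn_edgeDiff⟩

/-- **Bijection between binary labelings and valid strandings of a single edge.**
Binary vectors `b` of length `n` (encoded as functions `ℕ → ℤ` taking values in `{0,1}`
on `{1,…,n}` and vanishing elsewhere) with exactly `ℓ` ones biject, via
`b ↦ (c ↦ b_c − b_{c+1})` (defined on `{1,…,n−1}`), with the functions
`α : {1,…,n−1} → {−1,0,1}` that are not identically zero, whose nonzero values
alternate in sign when read in increasing order of the argument, and for which
`∑_c c·α(c)` equals `ℓ` if `α(c_max) = 1` and `ℓ − n` if `α(c_max) = −1`. -/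
theorem binary_labelings_biject_with_strandings (n ℓ : ℕ) (hn : 2 ≤ n)
    (hl1 : 1 ≤ ℓ) (hl2 : ℓ ≤ n - 1) :
    Set.BijOn
      (fun (b : ℕ → ℤ) (c : ℕ) => if c ∈ Finset.Icc 1 (n - 1) then b c - b (c + 1) else 0)
      {b : ℕ → ℤ |
        (∀ i, b i = 0 ∨ b i = 1) ∧
        (∀ i, i ∉ Finset.Icc 1 n → b i = 0) ∧
        ((Finset.Icc 1 n).filter (fun i => b i = 1)).card = ℓ}
      {α : ℕ → ℤ |
        (∀ c, c ∉ Finset.Icc 1 (n - 1) → α c = 0) ∧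
        (∀ c, α c = -1 ∨ α c = 0 ∨ α c = 1) ∧
        (∃ c, α c ≠ 0) ∧
        (∀ c c', c < c' → α c ≠ 0 → α c' ≠ 0 →
          (∀ d, c < d → d < c' → α d = 0) → α c' = -α c) ∧
        (∀ cmax, α cmax ≠ 0 → (∀ c, cmax < c → α c = 0) →
          ∑ c ∈ Finset.Icc 1 (n - 1), (c : ℤ) * α c =
            if α cmax = 1 then (ℓ : ℤ) else (ℓ : ℤ) - n)} :=
  binary_labelings_biject_with_strandings_general n ℓ hl1 hl2
end

section
/- Let ν ≥ 0 and 0 ≤ k ≤ ν, and let b1, b2 be binary vectors of length n whose symmetric difference vector b1Δb2 equals the word 1^k 0^{ν−k} (k ones followed by ν−k zeros). Then, as multisets, S_{b1−b2} = { (ν−2k+1) + 2t : 0 ≤ t ≤ k−1 } (k elements in arithmetic progression of step 2 ending at ν−1) and S_{b2−b1} = { (2k−ν+1) + 2t : 0 ≤ t ≤ ν−k−1 } (ν−k elements in arithmetic progression of step 2 ending at ν−1). Consequently, if k ≥ ν−k then S_{b1−b2} is the disjoint multiset union of S_{b2−b1} and {2k−ν+1−2j : 1 ≤ j ≤ 2k−ν},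 and if ν−k ≥ k then S_{b2−b1} is the disjoint multiset union of S_{b1−b2} and {ν−2k+1−2j : 1 ≤ j ≤ ν−2k}. -/
/-- `flex_{b1,b2}(i)` for binary vectors `b1, b2` of length `n`:
`#{j < i : (b1)_j = 1, (b2)_j = 0} − #{j < i : (b1)_j = 0, (b2)_j = 1}
 − #{j > i : (b1)_j = 1, (b2)_j = 0} + #{j > i : (b1)_j = 0, (b2)_j = 1}`,
where `j` ranges over `{1,…,n}`. -/
def flexp (n : ℕ) (b1 b2 : ℕ → ℤ) (i : ℕ) : ℤ :=
  (((Finset.Icc 1 n).filter (fun j => j < i ∧ b1 j = 1 ∧ b2 j = 0)).card : ℤ)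
    - (((Finset.Icc 1 n).filter (fun j => j < i ∧ b1 j = 0 ∧ b2 j = 1)).card : ℤ)
    - (((Finset.Icc 1 n).filter (fun j => i < j ∧ b1 j = 1 ∧ b2 j = 0)).card : ℤ)
    + (((Finset.Icc 1 n).filter (fun j => i < j ∧ b1 j = 0 ∧ b2 j = 1)).card : ℤ)

/-! Every index of `S_{b1−b2}` precedes every index of `S_{b2−b1}`, so with `k` and `ν − k` the
sizes of the two index sets, `flex` at the index of the first set having `r` indices of that set
to its left is `r − (k − 1 − r) + (ν − k) = ν − 2k + 1 + 2r`, and `flex` at the index of the second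
set having `r` indices of that set to its right is `k − (ν − k − 1 − r) + r = 2k − ν + 1 + 2r`.
On each set `r` runs bijectively over `0, …, size − 1`. Splitting the longer progression where
the shorter one starts gives the two union statements. -/

open Finset

namespace Finset

theorem map_val_eq_range_of_injOn {α : Type*} {s : Finset α} {f : α → ℕ}
    (hf : Set.InjOn f s) (hlt : ∀ i ∈ s, f i < #s) : s.val.map f = Multiset.range #s := by
  rw [← image_val_of_injOn hf, ← range_val]
  congr 1
  refine eq_of_subset_of_card_le (fun r hr => ?_) (by rw [card_range, card_image_of_injOn hf])
  obtain ⟨i, hi, rfl⟩ := mem_image.1 hr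
  exact mem_range.2 (hlt i hi)

variable {α : Type*} [LinearOrder α] (s : Finset α)

theorem card_filter_lt_add_card_filter_gt {i : α} (hi : i ∈ s) :
    #{j ∈ s | j < i} + #{j ∈ s | i < j} + 1 = #s := by
  have hge : {j ∈ s | ¬j < i} = insert i {j ∈ s | i < j} := by
    ext j
    simp only [mem_filter, mem_insert, not_lt]
    constructor
    · rintro ⟨hj, hij⟩
      rcases hij.eq_or_lt with rfl | hij
      exacts [Or.inl rfl, Or.inr ⟨hj, hij⟩]
    · rintro (rfl | ⟨hj, hij⟩)
      exacts [⟨hi, le_rfl⟩, ⟨hj, hij.le⟩]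
  rw [← card_filter_add_card_filter_not (s := s) (fun j => j < i), hge,
    card_insert_of_notMem (by simp), add_assoc]

theorem strictMonoOn_card_filter_lt : StrictMonoOn (fun i => #{j ∈ s | j < i}) s :=
  fun i hi _ _ hii' => card_lt_card <| (ssubset_iff_of_subset
    (monotone_filter_right s fun _ _ hj => hj.trans hii')).2
    ⟨i, mem_filter.2 ⟨hi, hii'⟩, by simp⟩

theorem strictAntiOn_card_filter_gt : StrictAntiOn (fun i => #{j ∈ s | i < j}) s :=
  fun _ _ i' hi' hii' => card_lt_card <| (ssubset_iff_of_subset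
    (monotone_filter_right s fun _ _ hj => hii'.trans hj)).2
    ⟨i', mem_filter.2 ⟨hi', hii'⟩, by simp⟩

theorem map_card_filter_lt_eq_range :
    s.val.map (fun i => #{j ∈ s | j < i}) = Multiset.range #s :=
  map_val_eq_range_of_injOn (strictMonoOn_card_filter_lt s).injOn fun i hi => by
    have := card_filter_lt_add_card_filter_gt s hi; omega

theorem map_card_filter_gt_eq_range :
    s.val.map (fun i => #{j ∈ s | i < j}) = Multiset.range #s :=
  map_val_eq_range_of_injOn (strictAntiOn_card_filter_gt s).injOn fun i hi => by
    have := card_filter_lt_add_card_filter_gt s hi; omega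

end Finset

theorem map_range_add_eq_add_map_Icc (a : ℤ) (m d : ℕ) :
    (Multiset.range (m + d)).map (fun t : ℕ => a + 2 * t) =
      (Multiset.range m).map (fun t : ℕ => a + 2 * d + 2 * t) +
        (Icc 1 d).val.map (fun j : ℕ => a + 2 * d - 2 * j) := by
  have hIcc : (Icc 1 d).val = (Multiset.range d).map (fun t => d - t) := by
    rw [← range_val, ← image_val_of_injOn (fun t ht t' ht' h => by simp at ht ht'; omega)]
    congr 1
    ext j
    simp only [mem_Icc, mem_image, mem_range]
    exact ⟨fun h => ⟨d - j, by omega, by omega⟩, by rintro ⟨t, ht, rfl⟩; omega⟩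
  rw [add_comm m d, Multiset.range_add, Multiset.map_add, Multiset.map_map, hIcc,
    Multiset.map_map, add_comm]
  congr 1
  · refine Multiset.map_congr rfl fun t _ => ?_
    simp only [Function.comp_apply, Nat.cast_add]
    ring
  · refine Multiset.map_congr rfl fun t ht => ?_
    have : t ≤ d := (Multiset.mem_range.1 ht).le
    simp only [Function.comp_apply, Nat.cast_sub this]
    ring

section Flex

variable (n : ℕ) (b1 b2 : ℕ → ℤ)

def oneZeroIndices : Finset ℕ := {i ∈ Icc 1 n | b1 i = 1 ∧ b2 i = 0}

def zeroOneIndices : Finset ℕ := {i ∈ Icc 1 n | b1 i = 0 ∧ b2 i = 1}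

theorem flexp_eq (i : ℕ) : flexp n b1 b2 i =
    #{j ∈ oneZeroIndices n b1 b2 | j < i} - #{j ∈ zeroOneIndices n b1 b2 | j < i}
      - #{j ∈ oneZeroIndices n b1 b2 | i < j} + #{j ∈ zeroOneIndices n b1 b2 | i < j} := by
  simp only [flexp, oneZeroIndices, zeroOneIndices, filter_filter, and_comm]

theorem card_oneZeroIndices_add_card_zeroOneIndices
    (hb1 : ∀ i ∈ Icc 1 n, b1 i = 0 ∨ b1 i = 1) (hb2 : ∀ i ∈ Icc 1 n, b2 i = 0 ∨ b2 i = 1) :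
    #(oneZeroIndices n b1 b2) + #(zeroOneIndices n b1 b2) = #{i ∈ Icc 1 n | b1 i ≠ b2 i} := by
  rw [← card_union_of_disjoint]
  · congr 1
    ext i
    simp only [oneZeroIndices, zeroOneIndices, mem_union, mem_filter]
    constructor
    · rintro (⟨hi, h1, h2⟩ | ⟨hi, h1, h2⟩) <;> exact ⟨hi, by simp [h1, h2]⟩
    · rintro ⟨hi, hne⟩
      rcases hb1 i hi with h1 | h1 <;> rcases hb2 i hi with h2 | h2 <;> simp_all
  · exact disjoint_filter.2 fun i _ h h' => by omega

variable {n b1 b2}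

theorem flexp_of_mem_oneZeroIndices
    (hword : ∀ i ∈ oneZeroIndices n b1 b2, ∀ j ∈ zeroOneIndices n b1 b2, i < j)
    {i : ℕ} (hi : i ∈ oneZeroIndices n b1 b2) :
    flexp n b1 b2 i = #(zeroOneIndices n b1 b2) - #(oneZeroIndices n b1 b2) + 1
      + 2 * #{j ∈ oneZeroIndices n b1 b2 | j < i} := by
  have hsplit := card_filter_lt_add_card_filter_gt _ hi
  rw [flexp_eq, filter_false_of_mem fun j hj => (hword i hi j hj).not_gt,
    filter_true_of_mem fun j hj => hword i hi j hj, card_empty]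
  omega

theorem flexp_of_mem_zeroOneIndices
    (hword : ∀ i ∈ oneZeroIndices n b1 b2, ∀ j ∈ zeroOneIndices n b1 b2, i < j)
    {j : ℕ} (hj : j ∈ zeroOneIndices n b1 b2) :
    flexp n b1 b2 j = #(oneZeroIndices n b1 b2) - #(zeroOneIndices n b1 b2) + 1
      + 2 * #{x ∈ zeroOneIndices n b1 b2 | j < x} := by
  have hsplit := card_filter_lt_add_card_filter_gt _ hj
  rw [flexp_eq, filter_true_of_mem fun i hi => hword i hi j hj,
    filter_false_of_mem fun i hi => (hword i hi j hj).not_gt, card_empty]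
  omega

theorem map_flexp_oneZeroIndices
    (hword : ∀ i ∈ oneZeroIndices n b1 b2, ∀ j ∈ zeroOneIndices n b1 b2, i < j) :
    (oneZeroIndices n b1 b2).val.map (flexp n b1 b2) =
      (Multiset.range #(oneZeroIndices n b1 b2)).map fun t : ℕ =>
        (#(zeroOneIndices n b1 b2) : ℤ) - #(oneZeroIndices n b1 b2) + 1 + 2 * t := by
  rw [← map_card_filter_lt_eq_range, Multiset.map_map]
  exact Multiset.map_congr rfl fun i hi => flexp_of_mem_oneZeroIndices hword hi

theorem map_flexp_zeroOneIndices
    (hword : ∀ i ∈ oneZeroIndices n b1 b2, ∀ j ∈ zeroOneIndices n b1 b2, i < j) :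
    (zeroOneIndices n b1 b2).val.map (flexp n b1 b2) =
      (Multiset.range #(zeroOneIndices n b1 b2)).map fun t : ℕ =>
        (#(oneZeroIndices n b1 b2) : ℤ) - #(zeroOneIndices n b1 b2) + 1 + 2 * t := by
  rw [← map_card_filter_gt_eq_range, Multiset.map_map]
  exact Multiset.map_congr rfl fun j hj => flexp_of_mem_zeroOneIndices hword hj

end Flex

theorem square_switch_base_case_general (n ν k : ℕ) (b1 b2 : ℕ → ℤ)
    (hb1 : ∀ i ∈ Finset.Icc 1 n, b1 i = 0 ∨ b1 i = 1)
    (hb2 : ∀ i ∈ Finset.Icc 1 n, b2 i = 0 ∨ b2 i = 1)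
    (hν : ((Finset.Icc 1 n).filter (fun i => b1 i ≠ b2 i)).card = ν)
    (hkcard : ((Finset.Icc 1 n).filter (fun i => b1 i = 1 ∧ b2 i = 0)).card = k)
    (hword : ∀ i ∈ Finset.Icc 1 n, ∀ j ∈ Finset.Icc 1 n,
      b1 i = 1 → b2 i = 0 → b1 j = 0 → b2 j = 1 → i < j) :
    (((Finset.Icc 1 n).filter (fun i => b1 i = 1 ∧ b2 i = 0)).val.map (flexp n b1 b2)
        = (Finset.range k).val.map (fun t => (ν : ℤ) - 2 * k + 1 + 2 * t)) ∧
    (((Finset.Icc 1 n).filter (fun i => b1 i = 0 ∧ b2 i = 1)).val.map (flexp n b1 b2)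
        = (Finset.range (ν - k)).val.map (fun t => 2 * (k : ℤ) - ν + 1 + 2 * t)) ∧
    (ν - k ≤ k →
      ((Finset.Icc 1 n).filter (fun i => b1 i = 1 ∧ b2 i = 0)).val.map (flexp n b1 b2)
        = ((Finset.Icc 1 n).filter (fun i => b1 i = 0 ∧ b2 i = 1)).val.map (flexp n b1 b2)
          + (Finset.Icc 1 (2 * k - ν)).val.map (fun j => 2 * (k : ℤ) - ν + 1 - 2 * j)) ∧
    (k ≤ ν - k →
      ((Finset.Icc 1 n).filter (fun i => b1 i = 0 ∧ b2 i = 1)).val.map (flexp n b1 b2)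
        = ((Finset.Icc 1 n).filter (fun i => b1 i = 1 ∧ b2 i = 0)).val.map (flexp n b1 b2)
          + (Finset.Icc 1 (ν - 2 * k)).val.map (fun j => (ν : ℤ) - 2 * k + 1 - 2 * j)) := by
  have hsep : ∀ i ∈ oneZeroIndices n b1 b2, ∀ j ∈ zeroOneIndices n b1 b2, i < j :=
    fun i hi j hj => by
      simp only [oneZeroIndices, zeroOneIndices, mem_filter] at hi hj
      exact hword i hi.1 j hj.1 hi.2.1 hi.2.2 hj.2.1 hj.2.2
  have hcard := card_oneZeroIndices_add_card_zeroOneIndices n b1 b2 hb1 hb2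
  change #(oneZeroIndices n b1 b2) = k at hkcard
  have hS₁ : (oneZeroIndices n b1 b2).val.map (flexp n b1 b2) =
      (Multiset.range k).map fun t : ℕ => (ν : ℤ) - 2 * k + 1 + 2 * t := by
    rw [map_flexp_oneZeroIndices hsep, hkcard]
    refine Multiset.map_congr rfl fun t _ => ?_
    omega
  have hS₂ : (zeroOneIndices n b1 b2).val.map (flexp n b1 b2) =
      (Multiset.range (ν - k)).map fun t : ℕ => 2 * (k : ℤ) - ν + 1 + 2 * t := by
    rw [map_flexp_zeroOneIndices hsep, show #(zeroOneIndices n b1 b2) = ν - k by omega]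
    refine Multiset.map_congr rfl fun t _ => ?_
    omega
  -- The statement casts `(range k).val` etc. to `Multiset ℤ` through the monad `Multiset`.
  simp only [← oneZeroIndices.eq_1, ← zeroOneIndices.eq_1, bind_pure_comp, Multiset.fmap_def,
    Multiset.map_map, Function.comp_def, range_val]
  refine ⟨hS₁, hS₂, fun hle => ?_, fun hle => ?_⟩
  · rw [hS₁, hS₂]
    convert map_range_add_eq_add_map_Icc ((ν : ℤ) - 2 * k + 1) (ν - k) (2 * k - ν) using 3 <;> omega
  · rw [hS₁, hS₂]
    convert map_range_add_eq_add_map_Icc (2 * (k : ℤ) - ν + 1) k (ν - 2 * k) using 3 <;> omega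

/-- **Base case of the square-switch induction.**  Suppose the symmetric difference
vector of `b1, b2` is the word `1^k 0^{ν−k}` (i.e. the symmetric difference set has
`ν` elements, exactly `k` of which have `(b1)_i = 1`, and all of the latter precede
all indices with `(b1)_i = 0`).  Then the multisets
`S_{b1−b2} = {flex(i) : (b1)_i = 1, (b2)_i = 0}` and
`S_{b2−b1} = {flex(i) : (b1)_i = 0, (b2)_i = 1}` are the stated arithmetic
progressions of step `2` ending at `ν−1`, and consequently the larger one is the
disjoint multiset union of the smaller with the stated multiset. -/
theorem square_switch_base_case (n ν k : ℕ) (hk : k ≤ ν) (b1 b2 : ℕ → ℤ)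
    (hb1 : ∀ i ∈ Finset.Icc 1 n, b1 i = 0 ∨ b1 i = 1)
    (hb2 : ∀ i ∈ Finset.Icc 1 n, b2 i = 0 ∨ b2 i = 1)
    (hν : ((Finset.Icc 1 n).filter (fun i => b1 i ≠ b2 i)).card = ν)
    (hkcard : ((Finset.Icc 1 n).filter (fun i => b1 i = 1 ∧ b2 i = 0)).card = k)
    (hword : ∀ i ∈ Finset.Icc 1 n, ∀ j ∈ Finset.Icc 1 n,
      b1 i = 1 → b2 i = 0 → b1 j = 0 → b2 j = 1 → i < j) :
    (((Finset.Icc 1 n).filter (fun i => b1 i = 1 ∧ b2 i = 0)).val.map (flexp n b1 b2)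
        = (Finset.range k).val.map (fun t => (ν : ℤ) - 2 * k + 1 + 2 * t)) ∧
    (((Finset.Icc 1 n).filter (fun i => b1 i = 0 ∧ b2 i = 1)).val.map (flexp n b1 b2)
        = (Finset.range (ν - k)).val.map (fun t => 2 * (k : ℤ) - ν + 1 + 2 * t)) ∧
    (ν - k ≤ k →
      ((Finset.Icc 1 n).filter (fun i => b1 i = 1 ∧ b2 i = 0)).val.map (flexp n b1 b2)
        = ((Finset.Icc 1 n).filter (fun i => b1 i = 0 ∧ b2 i = 1)).val.map (flexp n b1 b2)
          + (Finset.Icc 1 (2 * k - ν)).val.map (fun j => 2 * (k : ℤ) - ν + 1 - 2 * j)) ∧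
    (k ≤ ν - k →
      ((Finset.Icc 1 n).filter (fun i => b1 i = 0 ∧ b2 i = 1)).val.map (flexp n b1 b2)
        = ((Finset.Icc 1 n).filter (fun i => b1 i = 1 ∧ b2 i = 0)).val.map (flexp n b1 b2)
          + (Finset.Icc 1 (ν - 2 * k)).val.map (fun j => (ν : ℤ) - 2 * k + 1 - 2 * j)) :=
  square_switch_base_case_general n ν k b1 b2 hb1 hb2 hν hkcard hword
end

section
/- Let b1, b2 be any binary vectors of length n, let ν = |S_{b1Δb2}|, and let k and ν−k be the cardinalities of the multisets S_{b1−b2} and S_{b2−b1}, respectively. If k ≥ ν−k, then as multisets S_{b1−b2} = S_{b2−b1} ⊎ {2k−ν+1−2j : 1 ≤ j ≤ 2k−ν} (a disjoint multiset union). Symmetrically, if k ≤ ν−k, then S_{b2−b1} = S_{b1−b2} ⊎ {ν−2k+1−2j : 1 ≤ j ≤ ν−2k}. -/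
open Finset

def centeredRange (m : ℕ) : Multiset ℤ := (Icc 1 m).val.map fun j : ℕ => (m : ℤ) + 1 - 2 * j

theorem centeredRange_zero : centeredRange 0 = 0 := rfl

theorem centeredRange_succ (m : ℕ) :
    centeredRange (m + 1) = (m : ℤ) ::ₘ (centeredRange m).map (· - 1) := by
  rw [centeredRange, centeredRange, ← insert_Icc_add_one_left_eq_Icc (by omega),
    insert_val_of_notMem (by simp), Multiset.map_cons, Multiset.map_map,
    show (Icc (1 + 1) (m + 1)).val = (Icc 1 m).val.map (· + 1) from
      (Multiset.map_add_right_Icc 1 m 1).symm, Multiset.map_map]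
  congr 1
  · push_cast; ring
  · refine Multiset.map_congr rfl fun j _ => ?_
    simp only [Function.comp_apply]; push_cast; ring

theorem centeredRange_succ' (m : ℕ) :
    centeredRange (m + 1) = (-(m : ℤ)) ::ₘ (centeredRange m).map (· + 1) := by
  rw [centeredRange, centeredRange, ← insert_Icc_right_eq_Icc_add_one (by omega),
    insert_val_of_notMem (by simp), Multiset.map_cons, Multiset.map_map]
  congr 1
  · push_cast; ring
  · refine Multiset.map_congr rfl fun j _ => ?_
    simp only [Function.comp_apply]; push_cast; ring

theorem centeredRange_succ_map_sub_one (m : ℕ) :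
    (centeredRange (m + 1)).map (· - 1) = (-(m : ℤ) - 1) ::ₘ centeredRange m := by
  simp [centeredRange_succ']

theorem centeredRange_succ_map_add_one (m : ℕ) :
    (centeredRange (m + 1)).map (· + 1) = ((m : ℤ) + 1) ::ₘ centeredRange m := by
  simp [centeredRange_succ]

theorem map_Icc_eq_centeredRange {m : ℕ} {c : ℤ} (hc : c = m) :
    ((Icc 1 m).val : Multiset ℤ).map (fun j => c + 1 - 2 * j) = centeredRange m := by
  subst hc
  simp [centeredRange, Multiset.bind_singleton, Multiset.map_map]

/-- With truncated subtraction at most one of the two progressions is nonempty. -/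
def CenteredBalance (A B : Multiset ℤ) (k l : ℕ) : Prop :=
  A + centeredRange (l - k) = B + centeredRange (k - l)

namespace CenteredBalance

variable {A B : Multiset ℤ} {k l : ℕ}

theorem eq_add_of_le (h : CenteredBalance A B k l) (hlk : l ≤ k) :
    A = B + centeredRange (k - l) := by
  simpa [CenteredBalance, Nat.sub_eq_zero_of_le hlk, centeredRange_zero] using h

theorem eq_add_of_ge (h : CenteredBalance A B k l) (hkl : k ≤ l) :
    B = A + centeredRange (l - k) := by
  simpa [CenteredBalance, Nat.sub_eq_zero_of_le hkl, centeredRange_zero] using h.symm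

theorem cons_map_sub_one (h : CenteredBalance A B k l) :
    CenteredBalance (((k : ℤ) - l) ::ₘ A.map (· - 1)) (B.map (· - 1)) (k + 1) l := by
  rcases le_or_gt l k with hlk | hkl
  · rw [CenteredBalance, Nat.sub_eq_zero_of_le (show l ≤ k + 1 by omega), Nat.sub_add_comm hlk,
      centeredRange_succ, h.eq_add_of_le hlk, Multiset.map_add, Multiset.add_cons,
      Nat.cast_sub hlk]
    simp [centeredRange_zero]
  · obtain ⟨m, rfl⟩ : ∃ m, l = k + 1 + m := ⟨l - (k + 1), by omega⟩
    have hB := h.eq_add_of_ge (by omega)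
    rw [show k + 1 + m - k = m + 1 by omega] at hB
    rw [CenteredBalance, hB, Multiset.map_add, centeredRange_succ_map_sub_one,
      show k + 1 + m - (k + 1) = m by omega,
      Nat.sub_eq_zero_of_le (show k + 1 ≤ k + 1 + m by omega),
      Multiset.add_cons, centeredRange_zero, add_zero, Multiset.cons_add]
    congr 1
    push_cast; ring

theorem cons_map_add_one (h : CenteredBalance A B k l) :
    CenteredBalance (A.map (· + 1)) (((k : ℤ) - l) ::ₘ B.map (· + 1)) k (l + 1) := by
  rcases le_or_gt k l with hkl | hlk
  · rw [CenteredBalance, Nat.sub_eq_zero_of_le (show k ≤ l + 1 by omega), Nat.sub_add_comm hkl,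
      centeredRange_succ', h.eq_add_of_ge hkl, Multiset.map_add, Multiset.add_cons,
      Nat.cast_sub hkl]
    simp [centeredRange_zero]
  · obtain ⟨m, rfl⟩ : ∃ m, k = l + 1 + m := ⟨k - (l + 1), by omega⟩
    have hA := h.eq_add_of_le (by omega)
    rw [show l + 1 + m - l = m + 1 by omega] at hA
    rw [CenteredBalance, hA, Multiset.map_add, centeredRange_succ_map_add_one,
      show l + 1 + m - (l + 1) = m by omega,
      Nat.sub_eq_zero_of_le (show l + 1 ≤ l + 1 + m by omega),
      Multiset.add_cons, centeredRange_zero, add_zero, Multiset.cons_add]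
    congr 1
    push_cast; ring

end CenteredBalance

theorem card_filter_Icc_one_succ (n : ℕ) (P : ℕ → Prop) [DecidablePred P] :
    (((Icc 1 (n + 1)).filter P).card : ℤ) =
      ((Icc 1 n).filter P).card + if P (n + 1) then 1 else 0 := by
  rw [← insert_Icc_right_eq_Icc_add_one (by omega), filter_insert]
  split_ifs <;> simp

section

variable (n : ℕ) (b1 b2 : ℕ → ℤ)

def supp10 : Finset ℕ := (Icc 1 n).filter fun i => b1 i = 1 ∧ b2 i = 0

def supp01 : Finset ℕ := (Icc 1 n).filter fun i => b1 i = 0 ∧ b2 i = 1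

theorem supp10_succ : supp10 (n + 1) b1 b2 =
    if b1 (n + 1) = 1 ∧ b2 (n + 1) = 0 then insert (n + 1) (supp10 n b1 b2)
    else supp10 n b1 b2 := by
  rw [supp10, ← insert_Icc_right_eq_Icc_add_one (by omega), filter_insert]; rfl

theorem supp01_succ : supp01 (n + 1) b1 b2 =
    if b1 (n + 1) = 0 ∧ b2 (n + 1) = 1 then insert (n + 1) (supp01 n b1 b2)
    else supp01 n b1 b2 := by
  rw [supp01, ← insert_Icc_right_eq_Icc_add_one (by omega), filter_insert]; rfl

theorem flexp_succ_of_le {i : ℕ} (hi : i ≤ n) :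
    flexp (n + 1) b1 b2 i = flexp n b1 b2 i
      - (if b1 (n + 1) = 1 ∧ b2 (n + 1) = 0 then 1 else 0)
      + (if b1 (n + 1) = 0 ∧ b2 (n + 1) = 1 then 1 else 0) := by
  simp only [flexp, card_filter_Icc_one_succ]
  simp only [show i < n + 1 by omega, show ¬ n + 1 < i by omega, true_and, false_and,
    if_false, add_zero]
  ring

theorem flexp_succ_self :
    flexp (n + 1) b1 b2 (n + 1) = (supp10 n b1 b2).card - (supp01 n b1 b2).card := by
  have below (P : ℕ → Prop) [DecidablePred P] :
      (Icc 1 (n + 1)).filter (fun j => j < n + 1 ∧ P j) = (Icc 1 n).filter P := by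
    ext j; simp only [mem_filter, mem_Icc, Order.lt_add_one_iff]; tauto
  have above (P : ℕ → Prop) [DecidablePred P] :
      (Icc 1 (n + 1)).filter (fun j => n + 1 < j ∧ P j) = ∅ := by
    ext j; simp only [mem_filter, mem_Icc, notMem_empty, iff_false]; omega
  simp only [flexp, below, above, supp10, supp01, card_empty]
  ring

theorem map_flexp_succ {s : Finset ℕ} (hs : s ⊆ Icc 1 n) :
    s.val.map (flexp (n + 1) b1 b2) = (s.val.map (flexp n b1 b2)).map fun x =>
      x - (if b1 (n + 1) = 1 ∧ b2 (n + 1) = 0 then 1 else 0)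
        + (if b1 (n + 1) = 0 ∧ b2 (n + 1) = 1 then 1 else 0) := by
  rw [Multiset.map_map]
  exact Multiset.map_congr rfl fun i hi => flexp_succ_of_le n b1 b2 (mem_Icc.1 (hs hi)).2

theorem centeredBalance_flexp :
    CenteredBalance ((supp10 n b1 b2).val.map (flexp n b1 b2))
      ((supp01 n b1 b2).val.map (flexp n b1 b2)) (supp10 n b1 b2).card (supp01 n b1 b2).card := by
  induction n with
  | zero => rfl
  | succ n ih =>
    have h10n : n + 1 ∉ supp10 n b1 b2 := by simp [supp10]
    have h01n : n + 1 ∉ supp01 n b1 b2 := by simp [supp01]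
    have hs10 : supp10 n b1 b2 ⊆ Icc 1 n := filter_subset _ _
    have hs01 : supp01 n b1 b2 ⊆ Icc 1 n := filter_subset _ _
    rw [supp10_succ, supp01_succ]
    by_cases h10 : b1 (n + 1) = 1 ∧ b2 (n + 1) = 0
    · have h01 : ¬ (b1 (n + 1) = 0 ∧ b2 (n + 1) = 1) := fun h => by simp_all
      rw [if_pos h10, if_neg h01, insert_val_of_notMem h10n, card_insert_of_notMem h10n,
        Multiset.map_cons, flexp_succ_self, map_flexp_succ _ _ _ hs10, map_flexp_succ _ _ _ hs01]
      simpa [h10, h01] using ih.cons_map_sub_one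
    by_cases h01 : b1 (n + 1) = 0 ∧ b2 (n + 1) = 1
    · rw [if_neg h10, if_pos h01, insert_val_of_notMem h01n, card_insert_of_notMem h01n,
        Multiset.map_cons, flexp_succ_self, map_flexp_succ _ _ _ hs10, map_flexp_succ _ _ _ hs01]
      simpa [h10, h01] using ih.cons_map_add_one
    · rw [if_neg h10, if_neg h01, map_flexp_succ _ _ _ hs10, map_flexp_succ _ _ _ hs01]
      simpa [h10, h01] using ih

theorem card_filter_ne_eq_card_supp10_add_card_supp01
    (hb1 : ∀ i ∈ Icc 1 n, b1 i = 0 ∨ b1 i = 1)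
    (hb2 : ∀ i ∈ Icc 1 n, b2 i = 0 ∨ b2 i = 1) :
    ((Icc 1 n).filter fun i => b1 i ≠ b2 i).card =
      (supp10 n b1 b2).card + (supp01 n b1 b2).card := by
  rw [supp10, supp01, ← card_union_of_disjoint, ← filter_or]
  · refine congrArg card (filter_congr fun i hi => ?_)
    rcases hb1 i hi with h1 | h1 <;> rcases hb2 i hi with h2 | h2 <;> simp [h1, h2]
  · exact disjoint_filter.2 fun i _ h h' => by simp_all

end

/-- **Multiset decomposition of `flex`-values.**  For arbitrary binary vectors `b1, b2`
of length `n`, with `ν` the size of the symmetric difference set and `k` the size of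
`S_{b1−b2}`: if `k ≥ ν−k` then, as multisets,
`S_{b1−b2} = S_{b2−b1} ⊎ {2k−ν+1−2j : 1 ≤ j ≤ 2k−ν}`, and symmetrically if
`k ≤ ν−k` then `S_{b2−b1} = S_{b1−b2} ⊎ {ν−2k+1−2j : 1 ≤ j ≤ ν−2k}`. -/
theorem flex_multiset_decomposition (n ν k : ℕ) (b1 b2 : ℕ → ℤ)
    (hb1 : ∀ i ∈ Finset.Icc 1 n, b1 i = 0 ∨ b1 i = 1)
    (hb2 : ∀ i ∈ Finset.Icc 1 n, b2 i = 0 ∨ b2 i = 1)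
    (hν : ((Finset.Icc 1 n).filter (fun i => b1 i ≠ b2 i)).card = ν)
    (hk : ((Finset.Icc 1 n).filter (fun i => b1 i = 1 ∧ b2 i = 0)).card = k) :
    (ν - k ≤ k →
      ((Finset.Icc 1 n).filter (fun i => b1 i = 1 ∧ b2 i = 0)).val.map (flexp n b1 b2)
        = ((Finset.Icc 1 n).filter (fun i => b1 i = 0 ∧ b2 i = 1)).val.map (flexp n b1 b2)
          + (Finset.Icc 1 (2 * k - ν)).val.map (fun j => 2 * (k : ℤ) - ν + 1 - 2 * j)) ∧
    (k ≤ ν - k →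
      ((Finset.Icc 1 n).filter (fun i => b1 i = 0 ∧ b2 i = 1)).val.map (flexp n b1 b2)
        = ((Finset.Icc 1 n).filter (fun i => b1 i = 1 ∧ b2 i = 0)).val.map (flexp n b1 b2)
          + (Finset.Icc 1 (ν - 2 * k)).val.map (fun j => (ν : ℤ) - 2 * k + 1 - 2 * j)) := by
  have hk' : (supp10 n b1 b2).card = k := hk
  have hν' : ν = k + (supp01 n b1 b2).card := by
    rw [← hν, ← hk', card_filter_ne_eq_card_supp10_add_card_supp01 n b1 b2 hb1 hb2]
  have hbal := centeredBalance_flexp n b1 b2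
  rw [hk'] at hbal
  refine ⟨fun hle => ?_, fun hle => ?_⟩
  · rw [show 2 * k - ν = k - (supp01 n b1 b2).card by omega,
      map_Icc_eq_centeredRange (by omega)]
    exact hbal.eq_add_of_le (by omega)
  · rw [show ν - 2 * k = (supp01 n b1 b2).card - k by omega,
      map_Icc_eq_centeredRange (by omega)]
    exact hbal.eq_add_of_ge (by omega)
end

section
/- For all integers m and s and every integer t ≥ 1, the identity [s−t]_q · [m−1 choose t]_q + [m+s−t]_q · [m−1 choose t−1]_q = [s]_q · [m choose t]_q holds in ℚ(q), where the quantum binomials are defined by the product formula for arbitrary (possibly negative) integer tops. (This is the quantum-integer identity underlying the inductive step of the generalized square-switch relation.) -/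
/-- The variable `q` of the field `ℚ(q)` of rational functions. -/
noncomputable def q : RatFunc ℚ := RatFunc.X

/-- The quantum integer `[m]_q = (q^m − q^{−m})/(q − q^{−1})`. -/
noncomputable def qint (m : ℤ) : RatFunc ℚ :=
  (q ^ m - q ^ (-m)) / (q - q⁻¹)

/-- The quantum binomial `[m choose t]_q = ∏_{j=1}^{t} [m−t+j]_q / [j]_q`, defined for
arbitrary (possibly negative) integer tops. -/
noncomputable def qbinom (m : ℤ) (t : ℕ) : RatFunc ℚ :=
  ∏ j ∈ Finset.range t, qint (m - t + (j + 1)) / qint (j + 1)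

/-! Clearing the denominator `[t]_q`, the Pascal-type recurrences
`[t]_q [m−1 choose t]_q = [m−t]_q [m−1 choose t−1]_q` and
`[t]_q [m choose t]_q = [m]_q [m−1 choose t−1]_q` reduce the identity to
`[s−t]_q [m−t]_q + [m+s−t]_q [t]_q = [s]_q [m]_q`, the `q`-analogue of
`(s−t)(m−t) + (m+s−t)t = sm`, which follows by expanding the quantum integers in powers of `q`. -/

open Finset

lemma q_ne_zero : q ≠ 0 := RatFunc.X_ne_zero

/-- `q` has infinite order: its valuation at infinity is `exp 1`. -/
lemma q_zpow_injective : Function.Injective fun n : ℤ => q ^ n := fun a b h => by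
  classical
  simpa [q] using congrArg (RatFunc.inftyValuation ℚ) h

lemma q_zpow_sub_zpow_neg_ne_zero {n : ℤ} (hn : n ≠ 0) : q ^ n - q ^ (-n) ≠ 0 :=
  sub_ne_zero.2 fun h => hn (by linarith [q_zpow_injective h])

lemma q_sub_inv_ne_zero : q - q⁻¹ ≠ 0 := by
  simpa using q_zpow_sub_zpow_neg_ne_zero one_ne_zero

lemma qint_ne_zero {n : ℤ} (hn : n ≠ 0) : qint n ≠ 0 :=
  div_ne_zero (q_zpow_sub_zpow_neg_ne_zero hn) q_sub_inv_ne_zero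

lemma qint_sub_mul_qint_sub_add (m s t : ℤ) :
    qint (s - t) * qint (m - t) + qint (m + s - t) * qint t = qint s * qint m := by
  have := q_sub_inv_ne_zero
  have := zpow_ne_zero m q_ne_zero
  have := zpow_ne_zero s q_ne_zero
  have := zpow_ne_zero t q_ne_zero
  simp only [qint, zpow_sub₀ q_ne_zero, zpow_add₀ q_ne_zero, zpow_neg]
  field_simp
  ring

noncomputable def qfactorial (n : ℕ) : RatFunc ℚ := ∏ j ∈ range n, qint (j + 1)

noncomputable def qdescFactorial (m : ℤ) (n : ℕ) : RatFunc ℚ :=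
  ∏ j ∈ range n, qint (m - n + (j + 1))

lemma qfactorial_ne_zero (n : ℕ) : qfactorial n ≠ 0 :=
  prod_ne_zero_iff.2 fun _ _ => qint_ne_zero (by positivity)

lemma qbinom_eq_div (m : ℤ) (n : ℕ) : qbinom m n = qdescFactorial m n / qfactorial n :=
  prod_div_distrib _ _

lemma qfactorial_succ (n : ℕ) : qfactorial (n + 1) = qfactorial n * qint (n + 1) :=
  prod_range_succ _ _

lemma qdescFactorial_succ (m : ℤ) (n : ℕ) :
    qdescFactorial m (n + 1) = qdescFactorial (m - 1) n * qint m := by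
  rw [qdescFactorial, prod_range_succ, qdescFactorial]
  push_cast
  ring_nf

lemma qdescFactorial_succ' (m : ℤ) (n : ℕ) :
    qdescFactorial m (n + 1) = qdescFactorial m n * qint (m - n) := by
  rw [qdescFactorial, prod_range_succ', qdescFactorial]
  push_cast
  ring_nf

lemma qbinom_succ_right_eq (m : ℤ) (n : ℕ) :
    qbinom m (n + 1) * qint (n + 1) = qbinom m n * qint (m - n) := by
  have := qint_ne_zero (n := n + 1) (by positivity)
  have := qfactorial_ne_zero n
  rw [qbinom_eq_div, qbinom_eq_div, qdescFactorial_succ', qfactorial_succ]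
  field_simp

lemma qint_mul_qbinom_sub_one_eq (m : ℤ) (n : ℕ) :
    qint m * qbinom (m - 1) n = qbinom m (n + 1) * qint (n + 1) := by
  have := qint_ne_zero (n := n + 1) (by positivity)
  have := qfactorial_ne_zero n
  rw [qbinom_eq_div, qbinom_eq_div, qdescFactorial_succ, qfactorial_succ]
  field_simp

/-- **Quantum-integer identity underlying the generalized square-switch relation.**
`[s−t]_q · [m−1 choose t]_q + [m+s−t]_q · [m−1 choose t−1]_q = [s]_q · [m choose t]_q`
for all integers `m`, `s` and every integer `t ≥ 1`. -/
theorem qint_square_switch_identity (m s : ℤ) (t : ℕ) (ht : 1 ≤ t) :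
    qint (s - t) * qbinom (m - 1) t + qint (m + s - t) * qbinom (m - 1) (t - 1)
      = qint s * qbinom m t := by
  obtain ⟨n, rfl⟩ := Nat.exists_eq_add_of_le' ht
  apply mul_right_cancel₀ (qint_ne_zero (n := n + 1) (by positivity))
  rw [Nat.add_sub_cancel]
  push_cast
  linear_combination (norm := ring_nf)
    qint (s - (n + 1)) * qbinom_succ_right_eq (m - 1) n
      + qint s * qint_mul_qbinom_sub_one_eq m n
      + qbinom (m - 1) n * qint_sub_mul_qint_sub_add m s (n + 1)
end
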